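/- arXiv:1507.01893 — 4 statements merged into one kernel-verified Lean document; each statement's English description precedes it below -/
import Mathlib

section
/- Suppose u : ℝ × ℝ → ℝ is smooth with u_x(t,x) ≠ 0 everywhere, and suppose there is a smooth function x̃ : ℝ × ℝ → ℝ (the hodograph inverse) satisfying x̃(t, u(t,x)) = x for all (t,x). If u satisfies u_t = u_x^{-2} u_{xx} + Q(u), then w(t,v) := x̃(t,v) satisfies the linear PDE w_t = w_{vv} - Q(v) w_v on the range of u. -/
/-- Hodograph linearization: if `u_t = u_x⁻² u_xx + Q(u)` with `u_x ≠ 0`, and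
`x̃(t, u(t,x)) = x`, then `w := x̃` satisfies `w_t = w_vv - Q(v) w_v` on the
range of `u`. -/
theorem hodograph_linearization
    (Q : ℝ → ℝ) (hQ : ContDiff ℝ (⊤ : ℕ∞) Q)
    (u : ℝ → ℝ → ℝ) (hu : ContDiff ℝ (⊤ : ℕ∞) (fun p : ℝ × ℝ => u p.1 p.2))
    (hux : ∀ t x : ℝ, deriv (u t) x ≠ 0)
    (w : ℝ → ℝ → ℝ) (hw : ContDiff ℝ (⊤ : ℕ∞) (fun p : ℝ × ℝ => w p.1 p.2))
    (hinv : ∀ t x : ℝ, w t (u t x) = x)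
    (heq : ∀ t x : ℝ,
      deriv (fun s => u s x) t
        = (deriv (u t) x)⁻¹ ^ 2 * deriv (deriv (u t)) x + Q (u t x)) :
    ∀ t x : ℝ,
      deriv (fun s => w s (u t x)) t
        = deriv (deriv (w t)) (u t x) - Q (u t x) * deriv (w t) (u t x) := by
  intro t x
  set v := u t x with hv
  have hut : ContDiff ℝ (⊤ : ℕ∞) (u t) := hu.comp (contDiff_const.prodMk contDiff_id)
  have hwt : ContDiff ℝ (⊤ : ℕ∞) (w t) := hw.comp (contDiff_const.prodMk contDiff_id)
  have hut' : ContDiff ℝ ((⊤ : ℕ∞) : WithTop ℕ∞) (deriv (u t)) :=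
    (contDiff_infty_iff_deriv.mp (hut.of_le (by simp))).2
  have hwt' : ContDiff ℝ ((⊤ : ℕ∞) : WithTop ℕ∞) (deriv (w t)) :=
    (contDiff_infty_iff_deriv.mp (hwt.of_le (by simp))).2
  set ux := deriv (u t) x with hux0
  set uxx := deriv (deriv (u t)) x with huxx0
  set wv := deriv (w t) v with hwv0
  set wvv := deriv (deriv (w t)) v with hwvv0
  -- first spatial derivative of the inverse relation
  have key : ∀ x' : ℝ, deriv (w t) (u t x') * deriv (u t) x' = 1 := by
    intro x'
    have h1 : HasDerivAt (u t) (deriv (u t) x') x' :=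
      (hut.differentiable (by simp) x').hasDerivAt
    have h2 : HasDerivAt (w t) (deriv (w t) (u t x')) (u t x') :=
      (hwt.differentiable (by simp) _).hasDerivAt
    have h3 : HasDerivAt (fun y => w t (u t y))
        (deriv (w t) (u t x') * deriv (u t) x') x' := h2.comp x' h1
    have h4 : (fun y => w t (u t y)) = id := funext (hinv t)
    rw [h4] at h3
    simpa using h3.deriv.symm
  have hwvux : wv * ux = 1 := key x
  -- second spatial derivative
  have key2 : wvv * ux * ux + wv * uxx = 0 := by
    have h1 : HasDerivAt (u t) ux x := (hut.differentiable (by simp) x).hasDerivAt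
    have h2 : HasDerivAt (deriv (w t)) wvv v :=
      (hwt'.differentiable (by norm_num) _).hasDerivAt
    have h3 : HasDerivAt (fun y => deriv (w t) (u t y)) (wvv * ux) x := h2.comp x h1
    have h4 : HasDerivAt (deriv (u t)) uxx x := (hut'.differentiable (by norm_num) x).hasDerivAt
    have h5 : HasDerivAt (fun y => deriv (w t) (u t y) * deriv (u t) y) _ x := h3.mul h4
    have h6 : (fun y => deriv (w t) (u t y) * deriv (u t) y) = fun _ => (1 : ℝ) :=
      funext key
    rw [h6] at h5
    have h7 := h5.deriv
    rw [deriv_const] at h7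
    linarith [h7]
  -- time derivative via the chain rule in two variables
  set W : ℝ × ℝ → ℝ := fun p => w p.1 p.2 with hW
  have hWd : DifferentiableAt ℝ W (t, v) := (hw.differentiable (by simp)).differentiableAt
  have hUt : HasDerivAt (fun s => u s x) (deriv (fun s => u s x) t) t := by
    have hd : DifferentiableAt ℝ (fun s => u s x) t := by
      have he : (fun s => u s x) = (fun p : ℝ × ℝ => u p.1 p.2) ∘ (fun s => (s, x)) := rfl
      rw [he]
      exact ((hu.differentiable (by simp)).differentiableAt).comp t
        ((differentiable_id.prodMk (differentiable_const x)) t)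
    exact hd.hasDerivAt
  set ut := deriv (fun s => u s x) t with hutdef
  have hF : HasDerivAt (fun s => ((s, u s x) : ℝ × ℝ)) ((1 : ℝ), ut) t :=
    (hasDerivAt_id t).prodMk hUt
  have hcomp : HasDerivAt (fun s => w s (u s x)) (fderiv ℝ W (t, v) (1, ut)) t :=
    HasFDerivAt.comp_hasDerivAt (l := W) (f := fun s => ((s, u s x) : ℝ × ℝ)) t hWd.hasFDerivAt hF
  have hconst : (fun s => w s (u s x)) = fun _ => x := funext fun s => hinv s x
  rw [hconst] at hcomp
  have hzero : fderiv ℝ W (t, v) (1, ut) = 0 := by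
    simpa using hcomp.deriv.symm
  -- partial derivatives as fderiv applied to basis vectors
  have hpt : HasDerivAt (fun s => w s v) (fderiv ℝ W (t, v) (1, 0)) t :=
    HasFDerivAt.comp_hasDerivAt (l := W) (f := fun s => ((id s, v) : ℝ × ℝ)) t hWd.hasFDerivAt ((hasDerivAt_id t).prodMk (hasDerivAt_const t v))
  have hpv : HasDerivAt (fun y => w t y) (fderiv ℝ W (t, v) (0, 1)) v :=
    HasFDerivAt.comp_hasDerivAt (l := W) (f := fun y => ((t, id y) : ℝ × ℝ)) v hWd.hasFDerivAt ((hasDerivAt_const v t).prodMk (hasDerivAt_id v))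
  have hsplit : ((1 : ℝ), ut) = ((1 : ℝ), (0 : ℝ)) + ut • ((0 : ℝ), (1 : ℝ)) := by
    simp
  have hlin : fderiv ℝ W (t, v) (1, ut)
      = fderiv ℝ W (t, v) (1, 0) + ut * fderiv ℝ W (t, v) (0, 1) := by
    rw [hsplit, map_add, map_smul]
    simp
  have hwvF : wv = fderiv ℝ W (t, v) (0, 1) := by
    rw [hwv0]
    exact hpv.deriv
  have hwtF : deriv (fun s => w s v) t = fderiv ℝ W (t, v) (1, 0) := hpt.deriv
  have hmain : deriv (fun s => w s v) t + ut * wv = 0 := by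
    rw [hwtF, hwvF, ← hlin, hzero]
  have hueq := heq t x
  rw [← hutdef, ← hux0, ← huxx0, ← hv] at hueq
  have hxne : ux ≠ 0 := hux t x
  show deriv (fun s => w s v) t = wvv - Q v * wv
  have h1 : deriv (fun s => w s v) t = -ut * wv := by linarith
  rw [h1, hueq]
  have hwvval : wv = ux⁻¹ := by field_simp at hwvux ⊢; linarith
  have hwvvval : wvv = -(wv * uxx) * (ux⁻¹ * ux⁻¹) := by
    field_simp
    nlinarith [key2]
  rw [hwvvval, hwvval]
  field_simp
  ring
end

section
/- Conversely to the hodograph linearization: if w : ℝ × ℝ → ℝ is a smooth solution of w_t = w_{vv} - Q(v) w_v with w_v(t,v) ≠ 0 everywhere, and u : ℝ × ℝ → ℝ is smooth with w(t, u(t,x)) = x for all (t,x), then u satisfies u_t = u_x^{-2} u_{xx} + Q(u). -/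
/-- Converse hodograph: if `w_t = w_vv - Q(v) w_v` with `w_v ≠ 0` and
`w(t, u(t,x)) = x`, then `u_t = u_x⁻² u_xx + Q(u)`. -/
theorem hodograph_linearization_converse
    (Q : ℝ → ℝ) (hQ : ContDiff ℝ (⊤ : ℕ∞) Q)
    (w : ℝ → ℝ → ℝ) (hw : ContDiff ℝ (⊤ : ℕ∞) (fun p : ℝ × ℝ => w p.1 p.2))
    (hwv : ∀ t v : ℝ, deriv (w t) v ≠ 0)
    (hweq : ∀ t v : ℝ,
      deriv (fun s => w s v) t
        = deriv (deriv (w t)) v - Q v * deriv (w t) v)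
    (u : ℝ → ℝ → ℝ) (hu : ContDiff ℝ (⊤ : ℕ∞) (fun p : ℝ × ℝ => u p.1 p.2))
    (hinv : ∀ t x : ℝ, w t (u t x) = x) :
    ∀ t x : ℝ,
      deriv (fun s => u s x) t
        = (deriv (u t) x)⁻¹ ^ 2 * deriv (deriv (u t)) x + Q (u t x) := by
  intro t x
  have hWd : Differentiable ℝ (fun p : ℝ × ℝ => w p.1 p.2) := hw.differentiable (by simp)
  set W : ℝ × ℝ → ℝ := fun p => w p.1 p.2 with hWdef
  -- partial derivatives as directional derivatives of the full fderiv
  have hwtv : ∀ a b : ℝ, HasDerivAt (w a) (fderiv ℝ W (a, b) (0, 1)) b := by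
    intro a b
    have h := (hWd (a, b)).hasFDerivAt.comp_hasDerivAt b
      ((hasDerivAt_const b a).prodMk (hasDerivAt_id b))
    exact h
  have hwta : ∀ a b : ℝ, HasDerivAt (fun s => w s b) (fderiv ℝ W (a, b) (1, 0)) a := by
    intro a b
    have h := (hWd (a, b)).hasFDerivAt.comp_hasDerivAt a
      ((hasDerivAt_id a).prodMk (hasDerivAt_const a b))
    exact h
  have hwtC : ContDiff ℝ (⊤ : ℕ∞) (w t) := by
    have : ContDiff ℝ (⊤ : ℕ∞) (fun y : ℝ => w t y) := hw.comp (contDiff_const.prodMk contDiff_id)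
    exact this
  have hutC : ContDiff ℝ (⊤ : ℕ∞) (u t) := by
    have : ContDiff ℝ (⊤ : ℕ∞) (fun y : ℝ => u t y) := hu.comp (contDiff_const.prodMk contDiff_id)
    exact this
  have hdwv : Differentiable ℝ (deriv (w t)) :=
    ((contDiff_infty_iff_deriv.mp (hwtC.of_le (by simp))).2).differentiable (by simp)
  have hduv : Differentiable ℝ (deriv (u t)) :=
    ((contDiff_infty_iff_deriv.mp (hutC.of_le (by simp))).2).differentiable (by simp)
  have hux : HasDerivAt (u t) (deriv (u t) x) x := (hutC.differentiable (by simp) x).hasDerivAt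
  -- first derivative identity in x
  have hA : ∀ y : ℝ, deriv (w t) (u t y) * deriv (u t) y = 1 := by
    intro y
    have huy : HasDerivAt (u t) (deriv (u t) y) y := (hutC.differentiable (by simp) y).hasDerivAt
    have h1 : HasDerivAt (fun z => w t (u t z)) (deriv (w t) (u t y) * deriv (u t) y) y :=
      HasDerivAt.comp y ((hwtC.differentiable (by simp) (u t y)).hasDerivAt) huy
    have h2 : HasDerivAt (fun z => w t (u t z)) 1 y := by
      have he : (fun z : ℝ => w t (u t z)) = fun z => z := funext fun z => hinv t z
      rw [he]; exact hasDerivAt_id y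
    exact h1.unique h2
  have hC0 : deriv (u t) x ≠ 0 := by
    intro h
    have := hA x
    rw [h, mul_zero] at this
    exact zero_ne_one this
  -- second derivative identity in x
  have hB : deriv (deriv (w t)) (u t x) * deriv (u t) x * deriv (u t) x
      + deriv (w t) (u t x) * deriv (deriv (u t)) x = 0 := by
    have hg1 : HasDerivAt (fun z => deriv (w t) (u t z))
        (deriv (deriv (w t)) (u t x) * deriv (u t) x) x :=
      HasDerivAt.comp x ((hdwv (u t x)).hasDerivAt) hux
    have hg2 : HasDerivAt (deriv (u t)) (deriv (deriv (u t)) x) x := (hduv x).hasDerivAt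
    have hg : HasDerivAt (fun z => deriv (w t) (u t z) * deriv (u t) z)
        (deriv (deriv (w t)) (u t x) * deriv (u t) x * deriv (u t) x
          + deriv (w t) (u t x) * deriv (deriv (u t)) x) x := hg1.mul hg2
    have hc : HasDerivAt (fun z => deriv (w t) (u t z) * deriv (u t) z) 0 x := by
      have he : (fun z : ℝ => deriv (w t) (u t z) * deriv (u t) z) = fun _ => (1:ℝ) :=
        funext hA
      rw [he]; exact hasDerivAt_const x 1
    exact hg.unique hc
  -- time derivative identity
  have hutx : HasDerivAt (fun s => u s x) (deriv (fun s => u s x) t) t := by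
    have hd : DifferentiableAt ℝ (fun s : ℝ => u s x) t := by
      have := ((hu.differentiable (by simp)) (t, x)).comp t
        (((differentiableAt_id (𝕜 := ℝ) (x := t)).prodMk (differentiableAt_const x)))
      exact this
    exact hd.hasDerivAt
  have hT : deriv (fun s => w s (u t x)) t
      + deriv (fun s => u s x) t * deriv (w t) (u t x) = 0 := by
    have hpair : HasDerivAt (fun s => (s, u s x)) (1, deriv (fun s => u s x) t) t :=
      (hasDerivAt_id t).prodMk hutx
    have hcomp : HasDerivAt (fun s => w s (u s x))
        (fderiv ℝ W (t, u t x) (1, deriv (fun s => u s x) t)) t := by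
      have := (hWd (t, u t x)).hasFDerivAt.comp_hasDerivAt t hpair
      exact this
    have hdecomp : fderiv ℝ W (t, u t x) (1, deriv (fun s => u s x) t)
        = fderiv ℝ W (t, u t x) (1, 0)
          + deriv (fun s => u s x) t * fderiv ℝ W (t, u t x) (0, 1) := by
      have h1 : ((1:ℝ), deriv (fun s => u s x) t)
          = (1, 0) + deriv (fun s => u s x) t • ((0:ℝ), (1:ℝ)) := by
        simp [Prod.ext_iff]
      rw [h1, map_add, map_smul, smul_eq_mul]
    have hconst : HasDerivAt (fun s => w s (u s x)) 0 t := by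
      have he : (fun s : ℝ => w s (u s x)) = fun _ => x := funext fun s => hinv s x
      rw [he]; exact hasDerivAt_const t x
    have h0 := hcomp.unique hconst
    rw [hdecomp] at h0
    rw [← (hwta t (u t x)).deriv, ← (hwtv t (u t x)).deriv] at h0
    linarith
  -- algebra
  have hw2 := hweq t (u t x)
  set A := deriv (w t) (u t x) with hAdef
  set B := deriv (deriv (w t)) (u t x) with hBdef
  set C := deriv (u t) x with hCdef
  set D := deriv (deriv (u t)) x with hDdef
  set T := deriv (fun s => u s x) t with hTdef
  have hAC : A * C = 1 := hA x
  have hinvC : C⁻¹ = A := (eq_inv_of_mul_eq_one_left hAC).symm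
  have e1 : T * A = Q (u t x) * A - B := by
    rw [hw2] at hT; linarith
  have e2 : T = Q (u t x) - B * C := by
    calc T = T * (A * C) := by rw [hAC, mul_one]
      _ = (T * A) * C := by ring
      _ = (Q (u t x) * A - B) * C := by rw [e1]
      _ = Q (u t x) * (A * C) - B * C := by ring
      _ = Q (u t x) - B * C := by rw [hAC]; ring
  have e3 : A ^ 2 * D = -(B * C) := by
    have h4 : A * D = -(B * C * C) := by linarith
    calc A ^ 2 * D = A * (A * D) := by ring
      _ = A * (-(B * C * C)) := by rw [h4]
      _ = -(B * C * (A * C)) := by ring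
      _ = -(B * C) := by rw [hAC]; ring
  rw [hinvC, e3, e2]
  ring
end

section
/- First integral for case (iii) with k = −1/3: let λ ≠ 0 and suppose φ : I → ℝ is smooth on an open interval I ⊂ (0,∞) with φ' > 0 and satisfies ω (φ')^{1/3} = (1/(3λ)) ω² φ on I. Then φ satisfies the second-order ODE (1/3)φ'' + ω^{-1}φ' + (−1/(3λ)) ω (φ')^{5/3} − (2/(3λ)) φ (φ')^{2/3} = 0. -/
/-- First integral for case (iii) with `k = -1/3`: if `ω (φ')^{1/3} = (1/(3λ)) ω² φ`
with `φ' > 0` on an open interval `I ⊆ (0,∞)`, then `φ` satisfies the reduced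
second-order ODE
`(1/3)φ'' + ω⁻¹ φ' - (1/(3λ)) ω (φ')^{5/3} - (2/(3λ)) φ (φ')^{2/3} = 0`. -/
theorem first_integral_case_iii
    (lam : ℝ) (hlam : lam ≠ 0)
    (I : Set ℝ) (hI : IsOpen I) (hIsub : I ⊆ Set.Ioi (0 : ℝ))
    (φ : ℝ → ℝ) (hφ : ContDiffOn ℝ (⊤ : ℕ∞) φ I)
    (hφ' : ∀ ω ∈ I, 0 < deriv φ ω)
    (hfi : ∀ ω ∈ I,
      ω * (deriv φ ω) ^ ((1 : ℝ) / 3) = (1 / (3 * lam)) * ω ^ 2 * φ ω) :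
    ∀ ω ∈ I,
      (1 / 3) * deriv (deriv φ) ω
        + ω⁻¹ * deriv φ ω
        + (-1 / (3 * lam)) * ω * (deriv φ ω) ^ ((5 : ℝ) / 3)
        - (2 / (3 * lam)) * φ ω * (deriv φ ω) ^ ((2 : ℝ) / 3)
        = 0 := by
  intro x hx
  have hx0 : (0:ℝ) < x := hIsub hx
  have hu : 0 < deriv φ x := hφ' x hx
  have hmem : I ∈ nhds x := hI.mem_nhds hx
  -- differentiability facts
  have hφ1 : DifferentiableOn ℝ φ I := hφ.differentiableOn (by simp)
  have hderivC : ContDiffOn ℝ (⊤ : ℕ∞) (deriv φ) I :=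
    hφ.deriv_of_isOpen (m := (⊤ : ℕ∞)) hI (by simp)
  have hd1 : HasDerivAt φ (deriv φ x) x :=
    ((hφ1.differentiableAt hmem)).hasDerivAt
  have hd2 : HasDerivAt (deriv φ) (deriv (deriv φ) x) x :=
    ((hderivC.differentiableOn (by simp)).differentiableAt hmem).hasDerivAt
  set u := deriv φ x with hu_def
  set u' := deriv (deriv φ) x with hu'_def
  -- derivative of (deriv φ)^(1/3)
  have hpow : HasDerivAt (fun y => (deriv φ y) ^ ((1:ℝ)/3))
      (u' * ((1:ℝ)/3) * u ^ ((1:ℝ)/3 - 1)) x :=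
    hd2.rpow_const (Or.inl hu.ne')
  -- LHS derivative
  have hL : HasDerivAt (fun y => y * (deriv φ y) ^ ((1:ℝ)/3))
      (1 * u ^ ((1:ℝ)/3) + x * (u' * ((1:ℝ)/3) * u ^ ((1:ℝ)/3 - 1))) x :=
    (hasDerivAt_id x).mul hpow
  -- RHS derivative
  have hR : HasDerivAt (fun y => (1 / (3 * lam)) * y ^ 2 * φ y)
      ((1 / (3 * lam)) * (2 * x) * φ x + (1 / (3 * lam)) * x ^ 2 * u) x := by
    have h1 : HasDerivAt (fun y : ℝ => (1 / (3 * lam)) * y ^ 2)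
        ((1 / (3 * lam)) * (2 * x)) x := by
      simpa [mul_comm] using ((hasDerivAt_pow 2 x).const_mul (1 / (3 * lam)))
    simpa [pow_one] using h1.fun_mul hd1
  -- the two functions agree on a neighborhood, so derivatives agree
  have heq : (fun y => y * (deriv φ y) ^ ((1:ℝ)/3))
      =ᶠ[nhds x] (fun y => (1 / (3 * lam)) * y ^ 2 * φ y) :=
    Filter.eventuallyEq_of_mem hmem (fun y hy => hfi y hy)
  have hL' : HasDerivAt (fun y => y * (deriv φ y) ^ ((1:ℝ)/3))
      ((1 / (3 * lam)) * (2 * x) * φ x + (1 / (3 * lam)) * x ^ 2 * u) x :=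
    hR.congr_of_eventuallyEq heq
  have E : 1 * u ^ ((1:ℝ)/3) + x * (u' * ((1:ℝ)/3) * u ^ ((1:ℝ)/3 - 1))
      = (1 / (3 * lam)) * (2 * x) * φ x + (1 / (3 * lam)) * x ^ 2 * u :=
    hL.unique hL'
  -- rpow identities
  set A := u ^ ((1:ℝ)/3) with hA_def
  have hA : 0 < A := Real.rpow_pos_of_pos hu _
  have hA3 : A ^ 3 = u := by
    rw [hA_def, ← Real.rpow_natCast (u ^ ((1:ℝ)/3)) 3, ← Real.rpow_mul hu.le]
    norm_num
  have h13 : u ^ ((1:ℝ)/3 - 1) = A / u := by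
    rw [Real.rpow_sub hu, Real.rpow_one, hA_def]
  have h23 : u ^ ((2:ℝ)/3) = A ^ 2 := by
    rw [hA_def, ← Real.rpow_natCast (u ^ ((1:ℝ)/3)) 2, ← Real.rpow_mul hu.le]
    norm_num
  have h53 : u ^ ((5:ℝ)/3) = A ^ 5 := by
    rw [hA_def, ← Real.rpow_natCast (u ^ ((1:ℝ)/3)) 5, ← Real.rpow_mul hu.le]
    norm_num
  rw [h23, h53]
  rw [h13] at E
  have hune : u ≠ 0 := hu.ne'
  have hxne : x ≠ 0 := hx0.ne'
  field_simp at E ⊢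
  refine mul_right_cancel₀ hA.ne' ?_
  linear_combination E - (x^2*(A^3+u) + 2*x*φ x)*hA3
end

section
/- Infinite-dimensional symmetry of the 2D equation u_t = |∇u|^{-2} Δu: if u(t,x₁,x₂) is a smooth solution of u_t = |∇u|^{-2}(u_{x₁x₁} + u_{x₂x₂}) with ∇u ≠ 0, and (A, B) : ℝ² → ℝ² is a smooth solution of the Cauchy–Riemann system A_{x₁} = B_{x₂}, A_{x₂} = −B_{x₁}, then the infinitesimal invariance holds: for the flow Φ_s of the vector field (A,B) on ℝ², the pulled-back family u_s(t,x) := u(t, Φ_s(x)) satisfies the PDE to first order in s, i.e. (d/ds)|_{s=0} [∂_t u_s − |∇u_s|^{-2} Δu_s] = 0 at every point where u solves the equation. -/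
/-- `∂u/∂x₁` of `u = u(t,x₁,x₂)`. -/
noncomputable def px1 (u : ℝ → ℝ → ℝ → ℝ) (t x₁ x₂ : ℝ) : ℝ :=
  deriv (fun y => u t y x₂) x₁

/-- `∂u/∂x₂` of `u = u(t,x₁,x₂)`. -/
noncomputable def px2 (u : ℝ → ℝ → ℝ → ℝ) (t x₁ x₂ : ℝ) : ℝ :=
  deriv (fun y => u t x₁ y) x₂

/-- `∂²u/∂x₁²`. -/
noncomputable def px1x1 (u : ℝ → ℝ → ℝ → ℝ) (t x₁ x₂ : ℝ) : ℝ :=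
  deriv (fun y => px1 u t y x₂) x₁

/-- `∂²u/∂x₂²`. -/
noncomputable def px2x2 (u : ℝ → ℝ → ℝ → ℝ) (t x₁ x₂ : ℝ) : ℝ :=
  deriv (fun y => px2 u t x₁ y) x₂

/-- The PDE operator `E[u] = u_t - |∇u|⁻² Δu`. -/
noncomputable def pdeOp (u : ℝ → ℝ → ℝ → ℝ) (t x₁ x₂ : ℝ) : ℝ :=
  deriv (fun s => u s x₁ x₂) t
    - (px1 u t x₁ x₂ ^ 2 + px2 u t x₁ x₂ ^ 2)⁻¹
        * (px1x1 u t x₁ x₂ + px2x2 u t x₁ x₂)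


open scoped ContDiff

section Infra
variable {E : Type*} [NormedAddCommGroup E] [NormedSpace ℝ E] {p : E}

/-- Directional (partial) derivative along `v`. -/
noncomputable def pd (v : E) (f : E → ℝ) : E → ℝ := fun p => fderiv ℝ f p v

lemma ContDiff.pdCD {f : E → ℝ} (hf : ContDiff ℝ ∞ f) (v : E) : ContDiff ℝ ∞ (pd v f) :=
  (hf.fderiv_right (m := ∞) le_rfl).clm_apply contDiff_const

lemma ContDiff.pdDiff {f : E → ℝ} (hf : ContDiff ℝ ∞ f) :
    DifferentiableAt ℝ f p :=
  (hf.differentiable (by decide)).differentiableAt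

lemma pd_comm' {f : E → ℝ} (hf : ContDiff ℝ ∞ f) (v w : E) (p : E) :
    pd v (pd w f) p = pd w (pd v f) p := by
  have hsym : IsSymmSndFDerivAt ℝ f p :=
    hf.contDiffAt.isSymmSndFDerivAt (by rw [minSmoothness_of_isRCLikeNormedField]; decide)
  have hdf : DifferentiableAt ℝ (fderiv ℝ f) p :=
    ((hf.fderiv_right (m := ∞) le_rfl).differentiable
      (by decide)).differentiableAt
  have h1 : ∀ v w : E, pd v (pd w f) p = fderiv ℝ (fderiv ℝ f) p v w := by
    intro v w
    show fderiv ℝ (fun q => fderiv ℝ f q w) p v = _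
    rw [fderiv_clm_apply hdf (differentiableAt_const w)]
    simp
  rw [h1, h1, hsym.eq]

lemma pd_comm {f : E → ℝ} (hf : ContDiff ℝ ∞ f) (v w : E) :
    pd v (pd w f) = pd w (pd v f) := funext (pd_comm' hf v w)

lemma pd_hasDerivAt {f : E → ℝ} {c : ℝ → E} {v : E} {x : ℝ}
    (hf : DifferentiableAt ℝ f (c x)) (hc : HasDerivAt c v x) :
    HasDerivAt (fun y => f (c y)) (pd v f (c x)) x :=
  hf.hasFDerivAt.comp_hasDerivAt x hc

lemma pd_add {f g : E → ℝ} (hf : DifferentiableAt ℝ f p) (hg : DifferentiableAt ℝ g p) (v : E) :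
    pd v (fun q => f q + g q) p = pd v f p + pd v g p := by
  show fderiv ℝ _ p v = _
  rw [fderiv_fun_add hf hg]; rfl

lemma pd_neg {f : E → ℝ} (v : E) (p : E) :
    pd v (fun q => -f q) p = - pd v f p := by
  show fderiv ℝ _ p v = _
  rw [fderiv_fun_neg]; rfl

lemma pd_mul {f g : E → ℝ} (hf : DifferentiableAt ℝ f p) (hg : DifferentiableAt ℝ g p) (v : E) :
    pd v (fun q => f q * g q) p = pd v f p * g p + f p * pd v g p := by
  show fderiv ℝ _ p v = _
  rw [fderiv_fun_mul hf hg]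
  simp [pd]
  ring

lemma pd_sq {f : E → ℝ} (hf : DifferentiableAt ℝ f p) (v : E) :
    pd v (fun q => f q ^ 2) p = 2 * f p * pd v f p := by
  have h : (fun q => f q ^ 2) = fun q => f q * f q := by funext q; ring
  rw [h, pd_mul hf hf]; ring

lemma pd_inv {f : E → ℝ} (hf : DifferentiableAt ℝ f p) (hne : f p ≠ 0) (v : E) :
    pd v (fun q => (f q)⁻¹) p = -((f p)^2)⁻¹ * pd v f p := by
  show fderiv ℝ ((fun x : ℝ => x⁻¹) ∘ f) p v = _
  rw [fderiv_comp p (differentiableAt_inv hne) hf, fderiv_inv]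
  simp [pd]
  ring

lemma pd_inv_mul {f g : E → ℝ} (hf : DifferentiableAt ℝ f p)
    (hg : DifferentiableAt ℝ g p) (hne : f p ≠ 0) (v : E) :
    pd v (fun q => (f q)⁻¹ * g q) p
      = -((f p)^2)⁻¹ * pd v f p * g p + (f p)⁻¹ * pd v g p := by
  rw [pd_mul (f := fun q => (f q)⁻¹) (hf.inv hne) hg, pd_inv hf hne]

end Infra

section Coord
noncomputable def e1 : ℝ×ℝ×ℝ×ℝ := (1,0,0,0)
noncomputable def e2 : ℝ×ℝ×ℝ×ℝ := (0,1,0,0)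
noncomputable def e3 : ℝ×ℝ×ℝ×ℝ := (0,0,1,0)
noncomputable def e4 : ℝ×ℝ×ℝ×ℝ := (0,0,0,1)
noncomputable def f1 : ℝ×ℝ×ℝ := (1,0,0)
noncomputable def f2 : ℝ×ℝ×ℝ := (0,1,0)
noncomputable def f3 : ℝ×ℝ×ℝ := (0,0,1)
noncomputable def g1 : ℝ×ℝ := (1,0)
noncomputable def g2 : ℝ×ℝ := (0,1)

variable {a b c d : ℝ}

lemma hdema4_1 {F : ℝ×ℝ×ℝ×ℝ → ℝ} (hF : DifferentiableAt ℝ F (a,b,c,d)) :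
    HasDerivAt (fun z => F (z,b,c,d)) (pd e1 F (a,b,c,d)) a :=
  pd_hasDerivAt (c := fun z => (z,b,c,d)) hF ((hasDerivAt_id a).prodMk ((hasDerivAt_const a b).prodMk
    ((hasDerivAt_const a c).prodMk (hasDerivAt_const a d))))

lemma hdema4_2 {F : ℝ×ℝ×ℝ×ℝ → ℝ} (hF : DifferentiableAt ℝ F (a,b,c,d)) :
    HasDerivAt (fun z => F (a,z,c,d)) (pd e2 F (a,b,c,d)) b :=
  pd_hasDerivAt (c := fun z => (a,z,c,d)) hF ((hasDerivAt_const b a).prodMk ((hasDerivAt_id b).prodMk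
    ((hasDerivAt_const b c).prodMk (hasDerivAt_const b d))))

lemma hdema4_3 {F : ℝ×ℝ×ℝ×ℝ → ℝ} (hF : DifferentiableAt ℝ F (a,b,c,d)) :
    HasDerivAt (fun z => F (a,b,z,d)) (pd e3 F (a,b,c,d)) c :=
  pd_hasDerivAt (c := fun z => (a,b,z,d)) hF ((hasDerivAt_const c a).prodMk ((hasDerivAt_const c b).prodMk
    ((hasDerivAt_id c).prodMk (hasDerivAt_const c d))))

lemma hdema4_4 {F : ℝ×ℝ×ℝ×ℝ → ℝ} (hF : DifferentiableAt ℝ F (a,b,c,d)) :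
    HasDerivAt (fun z => F (a,b,c,z)) (pd e4 F (a,b,c,d)) d :=
  pd_hasDerivAt (c := fun z => (a,b,c,z)) hF ((hasDerivAt_const d a).prodMk ((hasDerivAt_const d b).prodMk
    ((hasDerivAt_const d c).prodMk (hasDerivAt_id d))))

lemma deriv4_1 {F : ℝ×ℝ×ℝ×ℝ → ℝ} (hF : DifferentiableAt ℝ F (a,b,c,d))
    {g : ℝ → ℝ} (hg : ∀ z, g z = F (z,b,c,d)) : deriv g a = pd e1 F (a,b,c,d) := by
  rw [funext hg]; exact (hdema4_1 hF).deriv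

lemma deriv4_2 {F : ℝ×ℝ×ℝ×ℝ → ℝ} (hF : DifferentiableAt ℝ F (a,b,c,d))
    {g : ℝ → ℝ} (hg : ∀ z, g z = F (a,z,c,d)) : deriv g b = pd e2 F (a,b,c,d) := by
  rw [funext hg]; exact (hdema4_2 hF).deriv

lemma deriv4_3 {F : ℝ×ℝ×ℝ×ℝ → ℝ} (hF : DifferentiableAt ℝ F (a,b,c,d))
    {g : ℝ → ℝ} (hg : ∀ z, g z = F (a,b,z,d)) : deriv g c = pd e3 F (a,b,c,d) := by
  rw [funext hg]; exact (hdema4_3 hF).deriv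

lemma deriv4_4 {F : ℝ×ℝ×ℝ×ℝ → ℝ} (hF : DifferentiableAt ℝ F (a,b,c,d))
    {g : ℝ → ℝ} (hg : ∀ z, g z = F (a,b,c,z)) : deriv g d = pd e4 F (a,b,c,d) := by
  rw [funext hg]; exact (hdema4_4 hF).deriv

lemma deriv3_1 {F : ℝ×ℝ×ℝ → ℝ} (hF : DifferentiableAt ℝ F (a,b,c))
    {g : ℝ → ℝ} (hg : ∀ z, g z = F (z,b,c)) : deriv g a = pd f1 F (a,b,c) := by
  rw [funext hg]
  exact (pd_hasDerivAt (c := fun z => (z,b,c)) hF ((hasDerivAt_id a).prodMk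
    ((hasDerivAt_const a b).prodMk (hasDerivAt_const a c)))).deriv

lemma deriv3_2 {F : ℝ×ℝ×ℝ → ℝ} (hF : DifferentiableAt ℝ F (a,b,c))
    {g : ℝ → ℝ} (hg : ∀ z, g z = F (a,z,c)) : deriv g b = pd f2 F (a,b,c) := by
  rw [funext hg]
  exact (pd_hasDerivAt (c := fun z => (a,z,c)) hF ((hasDerivAt_const b a).prodMk
    ((hasDerivAt_id b).prodMk (hasDerivAt_const b c)))).deriv

lemma deriv3_3 {F : ℝ×ℝ×ℝ → ℝ} (hF : DifferentiableAt ℝ F (a,b,c))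
    {g : ℝ → ℝ} (hg : ∀ z, g z = F (a,b,z)) : deriv g c = pd f3 F (a,b,c) := by
  rw [funext hg]
  exact (pd_hasDerivAt (c := fun z => (a,b,z)) hF ((hasDerivAt_const c a).prodMk
    ((hasDerivAt_const c b).prodMk (hasDerivAt_id c)))).deriv

lemma deriv2_1 {F : ℝ×ℝ → ℝ} (hF : DifferentiableAt ℝ F (a,b))
    {g : ℝ → ℝ} (hg : ∀ z, g z = F (z,b)) : deriv g a = pd g1 F (a,b) := by
  rw [funext hg]
  exact (pd_hasDerivAt (c := fun z => (z,b)) hF ((hasDerivAt_id a).prodMk (hasDerivAt_const a b))).deriv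

lemma deriv2_2 {F : ℝ×ℝ → ℝ} (hF : DifferentiableAt ℝ F (a,b))
    {g : ℝ → ℝ} (hg : ∀ z, g z = F (a,z)) : deriv g b = pd g2 F (a,b) := by
  rw [funext hg]
  exact (pd_hasDerivAt (c := fun z => (a,z)) hF ((hasDerivAt_const b a).prodMk (hasDerivAt_id b))).deriv

end Coord

section SliceLift
open scoped ContDiff

lemma slice2 {W : ℝ×ℝ×ℝ×ℝ → ℝ} {V : ℝ×ℝ×ℝ → ℝ} (hW : ContDiff ℝ ∞ W) (hV : ContDiff ℝ ∞ V)
    (h : ∀ a b c : ℝ, W (0,a,b,c) = V (a,b,c)) (a b c : ℝ) :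
    pd e2 W (0,a,b,c) = pd f1 V (a,b,c) := by
  rw [← deriv4_2 hW.pdDiff (g := fun z => V (z,b,c)) (fun z => (h z b c).symm)]
  exact deriv3_1 hV.pdDiff (fun _ => rfl)

lemma slice3 {W : ℝ×ℝ×ℝ×ℝ → ℝ} {V : ℝ×ℝ×ℝ → ℝ} (hW : ContDiff ℝ ∞ W) (hV : ContDiff ℝ ∞ V)
    (h : ∀ a b c : ℝ, W (0,a,b,c) = V (a,b,c)) (a b c : ℝ) :
    pd e3 W (0,a,b,c) = pd f2 V (a,b,c) := by
  rw [← deriv4_3 hW.pdDiff (g := fun z => V (a,z,c)) (fun z => (h a z c).symm)]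
  exact deriv3_2 hV.pdDiff (fun _ => rfl)

lemma slice4 {W : ℝ×ℝ×ℝ×ℝ → ℝ} {V : ℝ×ℝ×ℝ → ℝ} (hW : ContDiff ℝ ∞ W) (hV : ContDiff ℝ ∞ V)
    (h : ∀ a b c : ℝ, W (0,a,b,c) = V (a,b,c)) (a b c : ℝ) :
    pd e4 W (0,a,b,c) = pd f3 V (a,b,c) := by
  rw [← deriv4_4 hW.pdDiff (g := fun z => V (a,b,z)) (fun z => (h a b z).symm)]
  exact deriv3_3 hV.pdDiff (fun _ => rfl)

lemma liftCD {h : ℝ×ℝ → ℝ} (hh : ContDiff ℝ ∞ h) :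
    ContDiff ℝ ∞ (fun r : ℝ×ℝ×ℝ => h (r.2.1, r.2.2)) :=
  hh.comp ((contDiff_fst.comp contDiff_snd).prodMk (contDiff_snd.comp contDiff_snd))

lemma lift1 {h : ℝ×ℝ → ℝ} (hh : ContDiff ℝ ∞ h) (a b c : ℝ) :
    pd f1 (fun r : ℝ×ℝ×ℝ => h (r.2.1, r.2.2)) (a,b,c) = 0 := by
  rw [← deriv3_1 (liftCD hh).pdDiff (g := fun _ => h (b,c)) (fun z => rfl)]
  exact deriv_const a _

lemma lift2 {h : ℝ×ℝ → ℝ} (hh : ContDiff ℝ ∞ h) (a b c : ℝ) :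
    pd f2 (fun r : ℝ×ℝ×ℝ => h (r.2.1, r.2.2)) (a,b,c) = pd g1 h (b,c) := by
  rw [← deriv3_2 (liftCD hh).pdDiff (g := fun z => h (z,c)) (fun z => rfl)]
  exact deriv2_1 hh.pdDiff (fun _ => rfl)

lemma lift3 {h : ℝ×ℝ → ℝ} (hh : ContDiff ℝ ∞ h) (a b c : ℝ) :
    pd f3 (fun r : ℝ×ℝ×ℝ => h (r.2.1, r.2.2)) (a,b,c) = pd g2 h (b,c) := by
  rw [← deriv3_3 (liftCD hh).pdDiff (g := fun z => h (b,z)) (fun z => rfl)]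
  exact deriv2_2 hh.pdDiff (fun _ => rfl)

end SliceLift
section Expand
open scoped ContDiff

lemma pd_expand2 (fa ga fb gb : ℝ×ℝ×ℝ → ℝ) (ha : ContDiff ℝ ∞ fa) (hga : ContDiff ℝ ∞ ga)
    (hb : ContDiff ℝ ∞ fb) (hgb : ContDiff ℝ ∞ gb) (v q : ℝ×ℝ×ℝ) :
    pd v (fun r => fa r * ga r + fb r * gb r) q
      = (pd v fa q * ga q + fa q * pd v ga q) + (pd v fb q * gb q + fb q * pd v gb q) := by
  have h1 : pd v (fun r => fa r * ga r + fb r * gb r) q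
      = pd v (fun r => fa r * ga r) q + pd v (fun r => fb r * gb r) q :=
    pd_add (ha.pdDiff.mul hga.pdDiff) (hb.pdDiff.mul hgb.pdDiff) v
  rw [h1, pd_mul ha.pdDiff hga.pdDiff, pd_mul hb.pdDiff hgb.pdDiff]

lemma pd_expand4 (p1 q1 p2 q2 p3 q3 p4 q4 : ℝ×ℝ×ℝ → ℝ)
    (h1 : ContDiff ℝ ∞ p1) (h1' : ContDiff ℝ ∞ q1) (h2 : ContDiff ℝ ∞ p2) (h2' : ContDiff ℝ ∞ q2)
    (h3 : ContDiff ℝ ∞ p3) (h3' : ContDiff ℝ ∞ q3) (h4 : ContDiff ℝ ∞ p4) (h4' : ContDiff ℝ ∞ q4)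
    (v q : ℝ×ℝ×ℝ) :
    pd v (fun r => (p1 r * q1 r + p2 r * q2 r) + (p3 r * q3 r + p4 r * q4 r)) q
      = ((pd v p1 q * q1 q + p1 q * pd v q1 q) + (pd v p2 q * q2 q + p2 q * pd v q2 q))
        + ((pd v p3 q * q3 q + p3 q * pd v q3 q) + (pd v p4 q * q4 q + p4 q * pd v q4 q)) := by
  have hstep : pd v (fun r => (p1 r * q1 r + p2 r * q2 r) + (p3 r * q3 r + p4 r * q4 r)) q
      = pd v (fun r => p1 r * q1 r + p2 r * q2 r) q + pd v (fun r => p3 r * q3 r + p4 r * q4 r) q :=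
    pd_add ((h1.pdDiff.mul h1'.pdDiff).add (h2.pdDiff.mul h2'.pdDiff))
      ((h3.pdDiff.mul h3'.pdDiff).add (h4.pdDiff.mul h4'.pdDiff)) v
  rw [hstep, pd_expand2 _ _ _ _ h1 h1' h2 h2' v q, pd_expand2 _ _ _ _ h3 h3' h4 h4' v q]

lemma pd_expand_pde (U : ℝ×ℝ×ℝ → ℝ) (hU : ContDiff ℝ ∞ U) (v q : ℝ×ℝ×ℝ)
    (hne : pd f2 U q ^ 2 + pd f3 U q ^ 2 ≠ 0) :
    pd v (fun r => (pd f2 U r ^ 2 + pd f3 U r ^ 2)⁻¹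
        * (pd f2 (pd f2 U) r + pd f3 (pd f3 U) r)) q
      = -((pd f2 U q ^ 2 + pd f3 U q ^ 2) ^ 2)⁻¹
          * (2 * pd f2 U q * pd v (pd f2 U) q + 2 * pd f3 U q * pd v (pd f3 U) q)
          * (pd f2 (pd f2 U) q + pd f3 (pd f3 U) q)
        + (pd f2 U q ^ 2 + pd f3 U q ^ 2)⁻¹
          * (pd v (pd f2 (pd f2 U)) q + pd v (pd f3 (pd f3 U)) q) := by
  have hf : DifferentiableAt ℝ (fun r => pd f2 U r ^ 2 + pd f3 U r ^ 2) q :=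
    ((hU.pdCD f2).pdDiff.pow 2).add ((hU.pdCD f3).pdDiff.pow 2)
  have hg : DifferentiableAt ℝ (fun r => pd f2 (pd f2 U) r + pd f3 (pd f3 U) r) q :=
    ((hU.pdCD f2).pdCD f2).pdDiff.add ((hU.pdCD f3).pdCD f3).pdDiff
  have h0 := pd_inv_mul (f := fun r => pd f2 U r ^ 2 + pd f3 U r ^ 2)
    (g := fun r => pd f2 (pd f2 U) r + pd f3 (pd f3 U) r) hf hg hne v
  rw [h0]
  have h1 : pd v (fun r => pd f2 U r ^ 2 + pd f3 U r ^ 2) q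
      = 2 * pd f2 U q * pd v (pd f2 U) q + 2 * pd f3 U q * pd v (pd f3 U) q := by
    have hh : pd v (fun r => pd f2 U r ^ 2 + pd f3 U r ^ 2) q
        = pd v (fun r => pd f2 U r ^ 2) q + pd v (fun r => pd f3 U r ^ 2) q :=
      pd_add ((hU.pdCD f2).pdDiff.pow 2) ((hU.pdCD f3).pdDiff.pow 2) v
    rw [hh, pd_sq (hU.pdCD f2).pdDiff, pd_sq (hU.pdCD f3).pdDiff]
  have h2 : pd v (fun r => pd f2 (pd f2 U) r + pd f3 (pd f3 U) r) q
      = pd v (pd f2 (pd f2 U)) q + pd v (pd f3 (pd f3 U)) q :=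
    pd_add ((hU.pdCD f2).pdCD f2).pdDiff ((hU.pdCD f3).pdCD f3).pdDiff v
  rw [h1, h2]

end Expand

section Defs
noncomputable def Ufn (u : ℝ → ℝ → ℝ → ℝ) : ℝ×ℝ×ℝ → ℝ := fun q => u q.1 q.2.1 q.2.2
noncomputable def Ffn (u : ℝ → ℝ → ℝ → ℝ) (Φ : ℝ → ℝ → ℝ → ℝ × ℝ) : ℝ×ℝ×ℝ×ℝ → ℝ :=
  fun p => u p.2.1 (Φ p.1 p.2.2.1 p.2.2.2).1 (Φ p.1 p.2.2.1 p.2.2.2).2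
noncomputable def ABfn (A : ℝ → ℝ → ℝ) : ℝ×ℝ → ℝ := fun z => A z.1 z.2
noncomputable def Lfn (A : ℝ → ℝ → ℝ) : ℝ×ℝ×ℝ → ℝ := fun q => A q.2.1 q.2.2
noncomputable def Vfn (u : ℝ → ℝ → ℝ → ℝ) (A B : ℝ → ℝ → ℝ) : ℝ×ℝ×ℝ → ℝ :=
  fun q => Lfn A q * pd f2 (Ufn u) q + Lfn B q * pd f3 (Ufn u) q
end Defs

/-- Infinite-dimensional symmetry of `u_t = |∇u|⁻² Δu`: if `(A,B)` satisfies the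
Cauchy–Riemann system and `Φ` is the flow of the vector field `(A,B)` on `ℝ²`,
then the pulled-back family `u_s(t,x) = u(t, Φ_s(x))` satisfies the PDE to first
order in `s`: the derivative at `s = 0` of `E[u_s]` vanishes at solution points. -/
theorem infinite_dimensional_symmetry_CR
    (u : ℝ → ℝ → ℝ → ℝ)
    (hu : ContDiff ℝ (⊤ : ℕ∞) (fun p : ℝ × ℝ × ℝ => u p.1 p.2.1 p.2.2))
    (hgrad : ∀ t x₁ x₂ : ℝ, (px1 u t x₁ x₂, px2 u t x₁ x₂) ≠ (0, 0))
    (hsol : ∀ t x₁ x₂ : ℝ, pdeOp u t x₁ x₂ = 0)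
    (A B : ℝ → ℝ → ℝ)
    (hA : ContDiff ℝ (⊤ : ℕ∞) (fun p : ℝ × ℝ => A p.1 p.2))
    (hB : ContDiff ℝ (⊤ : ℕ∞) (fun p : ℝ × ℝ => B p.1 p.2))
    -- Cauchy–Riemann system: A_{x₁} = B_{x₂}, A_{x₂} = -B_{x₁}
    (hCR1 : ∀ x₁ x₂ : ℝ,
      deriv (fun y => A y x₂) x₁ = deriv (fun y => B x₁ y) x₂)
    (hCR2 : ∀ x₁ x₂ : ℝ,
      deriv (fun y => A x₁ y) x₂ = - deriv (fun y => B y x₂) x₁)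
    -- `Φ` is the (smooth) flow of the vector field `(A,B)`
    (Φ : ℝ → ℝ → ℝ → ℝ × ℝ)
    (hΦ : ContDiff ℝ (⊤ : ℕ∞) (fun p : ℝ × ℝ × ℝ => Φ p.1 p.2.1 p.2.2))
    (hΦ0 : ∀ x₁ x₂ : ℝ, Φ 0 x₁ x₂ = (x₁, x₂))
    (hflow : ∀ s x₁ x₂ : ℝ,
      HasDerivAt (fun σ => Φ σ x₁ x₂)
        (A (Φ s x₁ x₂).1 (Φ s x₁ x₂).2, B (Φ s x₁ x₂).1 (Φ s x₁ x₂).2) s) :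
    ∀ t x₁ x₂ : ℝ,
      deriv (fun s =>
        pdeOp (fun t' y₁ y₂ => u t' (Φ s y₁ y₂).1 (Φ s y₁ y₂).2) t x₁ x₂) 0
        = 0 := by
  intro t x₁ x₂
  have hU : ContDiff ℝ ∞ (Ufn u) := hu.of_le (by simp)
  have hΦ' : ContDiff ℝ ∞ (fun p : ℝ × ℝ × ℝ => Φ p.1 p.2.1 p.2.2) := hΦ.of_le (by simp)
  have hA' : ContDiff ℝ ∞ (ABfn A) := hA.of_le (by simp)
  have hB' : ContDiff ℝ ∞ (ABfn B) := hB.of_le (by simp)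
  have hF : ContDiff ℝ ∞ (Ffn u Φ) := by
    have hΦc : ContDiff ℝ ∞ (fun p : ℝ×ℝ×ℝ×ℝ => Φ p.1 p.2.2.1 p.2.2.2) :=
      hΦ'.comp (contDiff_fst.prodMk ((contDiff_fst.comp (contDiff_snd.comp contDiff_snd)).prodMk
        (contDiff_snd.comp (contDiff_snd.comp contDiff_snd))))
    exact hU.comp ((contDiff_fst.comp contDiff_snd).prodMk
      ((contDiff_fst.comp hΦc).prodMk (contDiff_snd.comp hΦc)))
  -- conversions of the `deriv`-based partials to `pd` form
  have hpx1 : ∀ a b c : ℝ, px1 u a b c = pd f2 (Ufn u) (a,b,c) := fun a b c =>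
    deriv3_2 hU.pdDiff (fun z => rfl)
  have hpx2 : ∀ a b c : ℝ, px2 u a b c = pd f3 (Ufn u) (a,b,c) := fun a b c =>
    deriv3_3 hU.pdDiff (fun z => rfl)
  have hpx11 : ∀ a b c : ℝ, px1x1 u a b c = pd f2 (pd f2 (Ufn u)) (a,b,c) := fun a b c =>
    deriv3_2 (hU.pdCD f2).pdDiff (fun z => hpx1 a z c)
  have hpx22 : ∀ a b c : ℝ, px2x2 u a b c = pd f3 (pd f3 (Ufn u)) (a,b,c) := fun a b c =>
    deriv3_3 (hU.pdCD f3).pdDiff (fun z => hpx2 a b z)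
  have hptU : ∀ a b c : ℝ, deriv (fun s => u s b c) a = pd f1 (Ufn u) (a,b,c) := fun a b c =>
    deriv3_1 hU.pdDiff (fun z => rfl)
  have hΩ : ∀ a b c : ℝ, pd f2 (Ufn u) (a,b,c)^2 + pd f3 (Ufn u) (a,b,c)^2 ≠ 0 := by
    intro a b c h
    apply hgrad a b c
    rw [hpx1 a b c, hpx2 a b c]
    have h1 : pd f2 (Ufn u) (a,b,c) = 0 := by
      nlinarith [sq_nonneg (pd f2 (Ufn u) (a,b,c)), sq_nonneg (pd f3 (Ufn u) (a,b,c))]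
    have h2 : pd f3 (Ufn u) (a,b,c) = 0 := by
      nlinarith [sq_nonneg (pd f2 (Ufn u) (a,b,c)), sq_nonneg (pd f3 (Ufn u) (a,b,c))]
    rw [h1, h2]
  have hsolU : ∀ a b c : ℝ, pd f1 (Ufn u) (a,b,c)
      = (pd f2 (Ufn u) (a,b,c)^2 + pd f3 (Ufn u) (a,b,c)^2)⁻¹
        * (pd f2 (pd f2 (Ufn u)) (a,b,c) + pd f3 (pd f3 (Ufn u)) (a,b,c)) := by
    intro a b c
    have h := hsol a b c
    unfold pdeOp at h
    rw [hpx1 a b c, hpx2 a b c, hpx11 a b c, hpx22 a b c, hptU a b c] at h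
    linarith
  -- Step A: the PDE operator of the pulled-back family, in `pd` form
  have stepA : ∀ s a b c : ℝ,
      pdeOp (fun t' y₁ y₂ => u t' (Φ s y₁ y₂).1 (Φ s y₁ y₂).2) a b c
        = pd e2 (Ffn u Φ) (s,a,b,c)
          - ((pd e3 (Ffn u Φ) (s,a,b,c))^2 + (pd e4 (Ffn u Φ) (s,a,b,c))^2)⁻¹
            * (pd e3 (pd e3 (Ffn u Φ)) (s,a,b,c) + pd e4 (pd e4 (Ffn u Φ)) (s,a,b,c)) := by
    intro s
    have h1 : ∀ a b c : ℝ, px1 (fun t' y₁ y₂ => u t' (Φ s y₁ y₂).1 (Φ s y₁ y₂).2) a b c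
        = pd e3 (Ffn u Φ) (s,a,b,c) := fun a b c => deriv4_3 hF.pdDiff (fun z => rfl)
    have h2 : ∀ a b c : ℝ, px2 (fun t' y₁ y₂ => u t' (Φ s y₁ y₂).1 (Φ s y₁ y₂).2) a b c
        = pd e4 (Ffn u Φ) (s,a,b,c) := fun a b c => deriv4_4 hF.pdDiff (fun z => rfl)
    intro a b c
    have h11 : px1x1 (fun t' y₁ y₂ => u t' (Φ s y₁ y₂).1 (Φ s y₁ y₂).2) a b c
        = pd e3 (pd e3 (Ffn u Φ)) (s,a,b,c) :=
      deriv4_3 (hF.pdCD e3).pdDiff (fun z => h1 a z c)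
    have h22 : px2x2 (fun t' y₁ y₂ => u t' (Φ s y₁ y₂).1 (Φ s y₁ y₂).2) a b c
        = pd e4 (pd e4 (Ffn u Φ)) (s,a,b,c) :=
      deriv4_4 (hF.pdCD e4).pdDiff (fun z => h2 a b z)
    have ht : deriv (fun z : ℝ => u z (Φ s b c).1 (Φ s b c).2) a = pd e2 (Ffn u Φ) (s,a,b,c) :=
      deriv4_2 hF.pdDiff (fun z => rfl)
    unfold pdeOp
    rw [h1 a b c, h2 a b c, h11, h22, ht]
  -- slice at s = 0 : F(0,·) = U
  have h0 : ∀ a b c : ℝ, Ffn u Φ (0,a,b,c) = Ufn u (a,b,c) := by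
    intro a b c
    show u a (Φ 0 b c).1 (Φ 0 b c).2 = u a b c
    rw [hΦ0 b c]
  have hs3 : ∀ a b c : ℝ, pd e3 (Ffn u Φ) (0,a,b,c) = pd f2 (Ufn u) (a,b,c) := slice3 hF hU h0
  have hs4 : ∀ a b c : ℝ, pd e4 (Ffn u Φ) (0,a,b,c) = pd f3 (Ufn u) (a,b,c) := slice4 hF hU h0
  have hs33 : ∀ a b c : ℝ, pd e3 (pd e3 (Ffn u Φ)) (0,a,b,c) = pd f2 (pd f2 (Ufn u)) (a,b,c) :=
    slice3 (hF.pdCD e3) (hU.pdCD f2) hs3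
  have hs44 : ∀ a b c : ℝ, pd e4 (pd e4 (Ffn u Φ)) (0,a,b,c) = pd f3 (pd f3 (Ufn u)) (a,b,c) :=
    slice4 (hF.pdCD e4) (hU.pdCD f3) hs4
  -- V, the Lie derivative of u along (A,B)
  have hVcd : ContDiff ℝ ∞ (Vfn u A B) :=
    ((liftCD hA').mul (hU.pdCD f2)).add ((liftCD hB').mul (hU.pdCD f3))
  have hW0 : ∀ a b c : ℝ, pd e1 (Ffn u Φ) (0,a,b,c) = Vfn u A B (a,b,c) := by
    intro a b c
    have hG2 : ContDiff ℝ ∞ (fun w : ℝ×ℝ => u a w.1 w.2) :=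
      hU.comp (contDiff_const.prodMk contDiff_id)
    have hφ := hflow 0 b c
    rw [hΦ0 b c] at hφ
    have hcomp : HasDerivAt (fun σ : ℝ => u a (Φ σ b c).1 (Φ σ b c).2)
        (fderiv ℝ (fun w : ℝ×ℝ => u a w.1 w.2) (b,c) (A b c, B b c)) 0 := by
      have hfd : HasFDerivAt (fun w : ℝ×ℝ => u a w.1 w.2)
          (fderiv ℝ (fun w : ℝ×ℝ => u a w.1 w.2) (b,c)) (Φ 0 b c) := by
        rw [hΦ0 b c]; exact hG2.pdDiff.hasFDerivAt
      exact hfd.comp_hasDerivAt 0 hφ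
    have h10 : fderiv ℝ (fun w : ℝ×ℝ => u a w.1 w.2) (b,c) g1 = pd f2 (Ufn u) (a,b,c) := by
      have e1' : pd g1 (fun w : ℝ×ℝ => u a w.1 w.2) (b,c) = pd f2 (Ufn u) (a,b,c) := by
        rw [← deriv2_1 hG2.pdDiff (g := fun z => u a z c) (fun z => rfl)]
        exact deriv3_2 hU.pdDiff (fun z => rfl)
      exact e1'
    have h01 : fderiv ℝ (fun w : ℝ×ℝ => u a w.1 w.2) (b,c) g2 = pd f3 (Ufn u) (a,b,c) := by
      have e1' : pd g2 (fun w : ℝ×ℝ => u a w.1 w.2) (b,c) = pd f3 (Ufn u) (a,b,c) := by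
        rw [← deriv2_2 hG2.pdDiff (g := fun z => u a b z) (fun z => rfl)]
        exact deriv3_3 hU.pdDiff (fun z => rfl)
      exact e1'
    have hval : fderiv ℝ (fun w : ℝ×ℝ => u a w.1 w.2) (b,c) (A b c, B b c)
        = A b c * pd f2 (Ufn u) (a,b,c) + B b c * pd f3 (Ufn u) (a,b,c) := by
      have hsplit : ((A b c, B b c) : ℝ×ℝ) = A b c • g1 + B b c • g2 := by
        simp [g1, g2, Prod.ext_iff]
      rw [hsplit, map_add, map_smul, map_smul, h10, h01, smul_eq_mul, smul_eq_mul]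
    have hWe : pd e1 (Ffn u Φ) (0,a,b,c) = deriv (fun z : ℝ => u a (Φ z b c).1 (Φ z b c).2) 0 :=
      (deriv4_1 hF.pdDiff (fun z => rfl)).symm
    rw [hWe, hcomp.deriv, hval]
    rfl
  have hS2 : pd e2 (pd e1 (Ffn u Φ)) (0,t,x₁,x₂) = pd f1 (Vfn u A B) (t,x₁,x₂) :=
    slice2 (hF.pdCD e1) hVcd hW0 t x₁ x₂
  have hS3 : ∀ a b c : ℝ, pd e3 (pd e1 (Ffn u Φ)) (0,a,b,c) = pd f2 (Vfn u A B) (a,b,c) :=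
    slice3 (hF.pdCD e1) hVcd hW0
  have hS4 : ∀ a b c : ℝ, pd e4 (pd e1 (Ffn u Φ)) (0,a,b,c) = pd f3 (Vfn u A B) (a,b,c) :=
    slice4 (hF.pdCD e1) hVcd hW0
  have hS33 : pd e3 (pd e3 (pd e1 (Ffn u Φ))) (0,t,x₁,x₂)
      = pd f2 (pd f2 (Vfn u A B)) (t,x₁,x₂) :=
    slice3 ((hF.pdCD e1).pdCD e3) (hVcd.pdCD f2) hS3 t x₁ x₂
  have hS44 : pd e4 (pd e4 (pd e1 (Ffn u Φ))) (0,t,x₁,x₂)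
      = pd f3 (pd f3 (Vfn u A B)) (t,x₁,x₂) :=
    slice4 ((hF.pdCD e1).pdCD e4) (hVcd.pdCD f3) hS4 t x₁ x₂
  -- Step B: compute the s-derivative at 0
  have hgoalfun : (fun s => pdeOp (fun t' y₁ y₂ => u t' (Φ s y₁ y₂).1 (Φ s y₁ y₂).2) t x₁ x₂)
      = fun s => pd e2 (Ffn u Φ) (s,t,x₁,x₂)
          - ((pd e3 (Ffn u Φ) (s,t,x₁,x₂))^2 + (pd e4 (Ffn u Φ) (s,t,x₁,x₂))^2)⁻¹
            * (pd e3 (pd e3 (Ffn u Φ)) (s,t,x₁,x₂) + pd e4 (pd e4 (Ffn u Φ)) (s,t,x₁,x₂)) :=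
    funext fun s => stepA s t x₁ x₂
  rw [hgoalfun]
  have hne : (pd e3 (Ffn u Φ) (0,t,x₁,x₂))^2 + (pd e4 (Ffn u Φ) (0,t,x₁,x₂))^2 ≠ 0 := by
    rw [hs3 t x₁ x₂, hs4 t x₁ x₂]; exact hΩ t x₁ x₂
  have hd2 : HasDerivAt (fun s : ℝ => pd e2 (Ffn u Φ) (s,t,x₁,x₂))
      (pd e1 (pd e2 (Ffn u Φ)) (0,t,x₁,x₂)) 0 := hdema4_1 (hF.pdCD e2).pdDiff
  have hd3 : HasDerivAt (fun s : ℝ => pd e3 (Ffn u Φ) (s,t,x₁,x₂))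
      (pd e1 (pd e3 (Ffn u Φ)) (0,t,x₁,x₂)) 0 := hdema4_1 (hF.pdCD e3).pdDiff
  have hd4 : HasDerivAt (fun s : ℝ => pd e4 (Ffn u Φ) (s,t,x₁,x₂))
      (pd e1 (pd e4 (Ffn u Φ)) (0,t,x₁,x₂)) 0 := hdema4_1 (hF.pdCD e4).pdDiff
  have hd33 : HasDerivAt (fun s : ℝ => pd e3 (pd e3 (Ffn u Φ)) (s,t,x₁,x₂))
      (pd e1 (pd e3 (pd e3 (Ffn u Φ))) (0,t,x₁,x₂)) 0 := hdema4_1 ((hF.pdCD e3).pdCD e3).pdDiff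
  have hd44 : HasDerivAt (fun s : ℝ => pd e4 (pd e4 (Ffn u Φ)) (s,t,x₁,x₂))
      (pd e1 (pd e4 (pd e4 (Ffn u Φ))) (0,t,x₁,x₂)) 0 := hdema4_1 ((hF.pdCD e4).pdCD e4).pdDiff
  have htot := hd2.sub ((((hd3.pow 2).add (hd4.pow 2)).inv hne).mul (hd33.add hd44))
  have hD : deriv (fun s => pd e2 (Ffn u Φ) (s,t,x₁,x₂)
          - ((pd e3 (Ffn u Φ) (s,t,x₁,x₂))^2 + (pd e4 (Ffn u Φ) (s,t,x₁,x₂))^2)⁻¹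
            * (pd e3 (pd e3 (Ffn u Φ)) (s,t,x₁,x₂) + pd e4 (pd e4 (Ffn u Φ)) (s,t,x₁,x₂))) 0
      = _ := htot.deriv
  rw [hD]
  -- commute the s-derivative inward
  rw [pd_comm' hF e1 e2 ((0:ℝ),t,x₁,x₂), pd_comm' hF e1 e3 ((0:ℝ),t,x₁,x₂),
      pd_comm' hF e1 e4 ((0:ℝ),t,x₁,x₂)]
  have hc33 : pd e1 (pd e3 (pd e3 (Ffn u Φ))) ((0:ℝ),t,x₁,x₂)
      = pd e3 (pd e3 (pd e1 (Ffn u Φ))) ((0:ℝ),t,x₁,x₂) := by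
    rw [pd_comm' (hF.pdCD e3) e1 e3, pd_comm hF e1 e3]
  have hc44 : pd e1 (pd e4 (pd e4 (Ffn u Φ))) ((0:ℝ),t,x₁,x₂)
      = pd e4 (pd e4 (pd e1 (Ffn u Φ))) ((0:ℝ),t,x₁,x₂) := by
    rw [pd_comm' (hF.pdCD e4) e1 e4, pd_comm hF e1 e4]
  rw [hc33, hc44]
  -- slice at s = 0
  simp only [Pi.add_apply, Pi.pow_apply, Pi.inv_apply, Nat.cast_ofNat, Nat.reduceSub, pow_one]
  rw [hS33, hS44, hS3 t x₁ x₂, hS4 t x₁ x₂, hS2, hs33 t x₁ x₂, hs44 t x₁ x₂,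
      hs3 t x₁ x₂, hs4 t x₁ x₂]
  -- expansion of the derivatives of V
  have hVexp : ∀ v q : ℝ×ℝ×ℝ, pd v (Vfn u A B) q
      = (pd v (Lfn A) q * pd f2 (Ufn u) q + Lfn A q * pd v (pd f2 (Ufn u)) q)
        + (pd v (Lfn B) q * pd f3 (Ufn u) q + Lfn B q * pd v (pd f3 (Ufn u)) q) := by
    intro v q
    have hrfl : Vfn u A B = fun q => Lfn A q * pd f2 (Ufn u) q + Lfn B q * pd f3 (Ufn u) q := rfl
    rw [hrfl]
    exact pd_expand2 (Lfn A) (pd f2 (Ufn u)) (Lfn B) (pd f3 (Ufn u))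
      (liftCD hA') (hU.pdCD f2) (liftCD hB') (hU.pdCD f3) v q
  have hVfun2 : pd f2 (Vfn u A B)
      = fun q => (pd f2 (Lfn A) q * pd f2 (Ufn u) q + Lfn A q * pd f2 (pd f2 (Ufn u)) q)
        + (pd f2 (Lfn B) q * pd f3 (Ufn u) q + Lfn B q * pd f2 (pd f3 (Ufn u)) q) :=
    funext (hVexp f2)
  have hVfun3 : pd f3 (Vfn u A B)
      = fun q => (pd f3 (Lfn A) q * pd f2 (Ufn u) q + Lfn A q * pd f2 (pd f3 (Ufn u)) q)
        + (pd f3 (Lfn B) q * pd f3 (Ufn u) q + Lfn B q * pd f3 (pd f3 (Ufn u)) q) :=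
    funext fun q => by rw [hVexp f3 q, pd_comm' hU f3 f2 q]
  rw [hVexp f1 (t,x₁,x₂), hVexp f2 (t,x₁,x₂), hVexp f3 (t,x₁,x₂)]
  rw [hVfun2, hVfun3]
  rw [pd_expand4 (pd f2 (Lfn A)) (pd f2 (Ufn u)) (Lfn A) (pd f2 (pd f2 (Ufn u)))
      (pd f2 (Lfn B)) (pd f3 (Ufn u)) (Lfn B) (pd f2 (pd f3 (Ufn u)))
      ((liftCD hA').pdCD f2) (hU.pdCD f2) (liftCD hA') ((hU.pdCD f2).pdCD f2)
      ((liftCD hB').pdCD f2) (hU.pdCD f3) (liftCD hB') ((hU.pdCD f3).pdCD f2)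
      f2 (t,x₁,x₂)]
  rw [pd_expand4 (pd f3 (Lfn A)) (pd f2 (Ufn u)) (Lfn A) (pd f2 (pd f3 (Ufn u)))
      (pd f3 (Lfn B)) (pd f3 (Ufn u)) (Lfn B) (pd f3 (pd f3 (Ufn u)))
      ((liftCD hA').pdCD f3) (hU.pdCD f2) (liftCD hA') ((hU.pdCD f3).pdCD f2)
      ((liftCD hB').pdCD f3) (hU.pdCD f3) (liftCD hB') ((hU.pdCD f3).pdCD f3)
      f3 (t,x₁,x₂)]
  -- the time derivatives, via the PDE
  rw [pd_comm' hU f1 f2 (t,x₁,x₂), pd_comm' hU f1 f3 (t,x₁,x₂)]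
  have hUtfun : pd f1 (Ufn u)
      = fun q => (pd f2 (Ufn u) q^2 + pd f3 (Ufn u) q^2)⁻¹
          * (pd f2 (pd f2 (Ufn u)) q + pd f3 (pd f3 (Ufn u)) q) :=
    funext fun q => hsolU q.1 q.2.1 q.2.2
  rw [hUtfun]
  rw [pd_expand_pde (Ufn u) hU f2 (t,x₁,x₂) (hΩ t x₁ x₂),
      pd_expand_pde (Ufn u) hU f3 (t,x₁,x₂) (hΩ t x₁ x₂)]
  -- lifts of A, B and their derivatives
  have hLA1 : pd f1 (Lfn A) (t,x₁,x₂) = 0 := lift1 hA' t x₁ x₂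
  have hLB1 : pd f1 (Lfn B) (t,x₁,x₂) = 0 := lift1 hB' t x₁ x₂
  have hLA2 : ∀ a b c : ℝ, pd f2 (Lfn A) (a,b,c) = pd g1 (ABfn A) (b,c) := fun a b c => lift2 hA' a b c
  have hLA3 : ∀ a b c : ℝ, pd f3 (Lfn A) (a,b,c) = pd g2 (ABfn A) (b,c) := fun a b c => lift3 hA' a b c
  have hLB2 : ∀ a b c : ℝ, pd f2 (Lfn B) (a,b,c) = pd g1 (ABfn B) (b,c) := fun a b c => lift2 hB' a b c
  have hLB3 : ∀ a b c : ℝ, pd f3 (Lfn B) (a,b,c) = pd g2 (ABfn B) (b,c) := fun a b c => lift3 hB' a b c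
  have hLA2fun : pd f2 (Lfn A) = fun q : ℝ×ℝ×ℝ => pd g1 (ABfn A) (q.2.1, q.2.2) :=
    funext fun q => hLA2 q.1 q.2.1 q.2.2
  have hLA3fun : pd f3 (Lfn A) = fun q : ℝ×ℝ×ℝ => pd g2 (ABfn A) (q.2.1, q.2.2) :=
    funext fun q => hLA3 q.1 q.2.1 q.2.2
  have hLB2fun : pd f2 (Lfn B) = fun q : ℝ×ℝ×ℝ => pd g1 (ABfn B) (q.2.1, q.2.2) :=
    funext fun q => hLB2 q.1 q.2.1 q.2.2
  have hLB3fun : pd f3 (Lfn B) = fun q : ℝ×ℝ×ℝ => pd g2 (ABfn B) (q.2.1, q.2.2) :=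
    funext fun q => hLB3 q.1 q.2.1 q.2.2
  have hLA22 : pd f2 (pd f2 (Lfn A)) (t,x₁,x₂) = pd g1 (pd g1 (ABfn A)) (x₁,x₂) := by
    rw [hLA2fun]; exact lift2 (hA'.pdCD g1) t x₁ x₂
  have hLA33 : pd f3 (pd f3 (Lfn A)) (t,x₁,x₂) = pd g2 (pd g2 (ABfn A)) (x₁,x₂) := by
    rw [hLA3fun]; exact lift3 (hA'.pdCD g2) t x₁ x₂
  have hLB22 : pd f2 (pd f2 (Lfn B)) (t,x₁,x₂) = pd g1 (pd g1 (ABfn B)) (x₁,x₂) := by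
    rw [hLB2fun]; exact lift2 (hB'.pdCD g1) t x₁ x₂
  have hLB33 : pd f3 (pd f3 (Lfn B)) (t,x₁,x₂) = pd g2 (pd g2 (ABfn B)) (x₁,x₂) := by
    rw [hLB3fun]; exact lift3 (hB'.pdCD g2) t x₁ x₂
  rw [hLA1, hLB1, hLA22, hLA33, hLB22, hLB33, hLA2 t x₁ x₂, hLA3 t x₁ x₂,
      hLB2 t x₁ x₂, hLB3 t x₁ x₂]
  -- Cauchy-Riemann relations
  have hcr1' : ∀ b c : ℝ, pd g1 (ABfn A) (b,c) = pd g2 (ABfn B) (b,c) := by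
    intro b c
    rw [← deriv2_1 hA'.pdDiff (g := fun z => A z c) (fun z => rfl),
        ← deriv2_2 hB'.pdDiff (g := fun z => B b z) (fun z => rfl)]
    exact hCR1 b c
  have hcr2' : ∀ b c : ℝ, pd g2 (ABfn A) (b,c) = - pd g1 (ABfn B) (b,c) := by
    intro b c
    rw [← deriv2_2 hA'.pdDiff (g := fun z => A b z) (fun z => rfl),
        ← deriv2_1 hB'.pdDiff (g := fun z => B z c) (fun z => rfl)]
    exact hCR2 b c
  have hcr1fun : pd g1 (ABfn A) = pd g2 (ABfn B) := funext fun z => hcr1' z.1 z.2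
  have hcr2fun : pd g2 (ABfn A) = fun z => -(pd g1 (ABfn B) z) := funext fun z => hcr2' z.1 z.2
  have hhA : pd g2 (pd g2 (ABfn A)) (x₁,x₂) = - pd g1 (pd g1 (ABfn A)) (x₁,x₂) := by
    calc pd g2 (pd g2 (ABfn A)) (x₁,x₂)
        = pd g2 (fun z => -(pd g1 (ABfn B) z)) (x₁,x₂) := by rw [hcr2fun]
      _ = -(pd g2 (pd g1 (ABfn B)) (x₁,x₂)) := pd_neg g2 _
      _ = -(pd g1 (pd g2 (ABfn B)) (x₁,x₂)) := by rw [pd_comm' hB' g2 g1]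
      _ = - pd g1 (pd g1 (ABfn A)) (x₁,x₂) := by rw [← hcr1fun]
  have hhB : pd g2 (pd g2 (ABfn B)) (x₁,x₂) = - pd g1 (pd g1 (ABfn B)) (x₁,x₂) := by
    calc pd g2 (pd g2 (ABfn B)) (x₁,x₂)
        = pd g2 (pd g1 (ABfn A)) (x₁,x₂) := by rw [← hcr1fun]
      _ = pd g1 (pd g2 (ABfn A)) (x₁,x₂) := by rw [pd_comm' hA' g2 g1]
      _ = pd g1 (fun z => -(pd g1 (ABfn B) z)) (x₁,x₂) := by rw [hcr2fun]
      _ = - pd g1 (pd g1 (ABfn B)) (x₁,x₂) := pd_neg g1 _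
  rw [hhA, hhB, ← hcr1' x₁ x₂, hcr2' x₁ x₂]
  -- canonicalize mixed partial derivatives of U
  have hG112 : pd f3 (pd f2 (pd f2 (Ufn u))) (t,x₁,x₂)
      = pd f2 (pd f2 (pd f3 (Ufn u))) (t,x₁,x₂) := by
    rw [pd_comm' (hU.pdCD f2) f3 f2 (t,x₁,x₂), pd_comm hU f3 f2]
  have hG122 : pd f3 (pd f2 (pd f3 (Ufn u))) (t,x₁,x₂)
      = pd f2 (pd f3 (pd f3 (Ufn u))) (t,x₁,x₂) := pd_comm' (hU.pdCD f3) f3 f2 (t,x₁,x₂)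
  rw [hG112, hG122, pd_comm' hU f3 f2 (t,x₁,x₂)]
  -- final algebraic identity
  have hne' := hΩ t x₁ x₂
  field_simp
  ring
end
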